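/- Let f : P → Q be a (λ, c)-quasi-isometric embedding between graphs with path metrics. Then the map F : H_P → H_Q defined by F(x, m) = (f(x), m) between the combinatorial horoballs is a quasi-isometric embedding, with constants depending only on λ and c. -/

import Mathlib

/-!
A walk of length `h` in the horoball from `(x, m)` to `(y, n)` never climbs above level
`(h + m + n) / 2`, and a horizontal edge at level `j` spans distance at most `2 ^ j`; summing
these gives `d(x, y) ≤ 3 · 2 ^ ⌈(h + m + n) / 2⌉`. If `d'(f x, f y) ≤ λ d(x, y) + c`, then
`d'(f x, f y) ≤ 2 ^ (k + ⌈(h + m + n) / 2⌉)` as soon as `3λ + c ≤ 2 ^ k`, so in the target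
horoball one can climb to that level, cross with a single horizontal edge and descend, at total
length `h + 2k + O(1)`. The multiplicative constant `λ` only costs an additive `2k`, so `F` is in
fact a `(1, 2k + 3)`-quasi-isometric embedding; the lower bound is the same argument applied to
the coarse inverse inequality `d(x, y) ≤ λ d'(f x, f y) + λ c`.
-/

open SimpleGraph

/-- The Groves–Manning combinatorial horoball over a graph `G`: vertex set `V × ℕ`,
horizontal edges between `(x, m)` and `(y, m)` whenever `dist x y ≤ 2 ^ m`, and
vertical edges between `(x, m)` and `(x, m + 1)`. -/
def Horoball {V : Type*} (G : SimpleGraph V) : SimpleGraph (V × ℕ) where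
  Adj p q :=
    (p.2 = q.2 ∧ p.1 ≠ q.1 ∧ G.dist p.1 q.1 ≤ 2 ^ p.2) ∨
    (p.1 = q.1 ∧ (p.2 = q.2 + 1 ∨ q.2 = p.2 + 1))
  symm := by
    constructor
    rintro ⟨x, m⟩ ⟨y, n⟩ (⟨h1, h2, h3⟩ | ⟨h1, h2⟩)
    · exact Or.inl ⟨h1.symm, h2.symm, by simp only at h1 h3 ⊢; rw [SimpleGraph.dist_comm, ← h1]; exact h3⟩
    · exact Or.inr ⟨h1.symm, h2.symm⟩
  loopless := by
    constructor
    rintro ⟨x, m⟩ (⟨_, h, _⟩ | ⟨_, h | h⟩)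
    · exact h rfl
    · omega
    · omega

namespace Horoball

variable {V : Type*}

section Walks

variable (G : SimpleGraph V)

theorem adj_succ (x : V) (m : ℕ) : (Horoball G).Adj (x, m) (x, m + 1) :=
  Or.inr ⟨rfl, Or.inr rfl⟩

theorem exists_walk_vertical (x : V) {a b : ℕ} (hab : a ≤ b) :
    ∃ w : (Horoball G).Walk (x, a) (x, b), w.length = b - a := by
  induction b, hab using Nat.le_induction with
  | base => exact ⟨.nil, by simp⟩
  | succ b hab ih =>
    obtain ⟨w, hw⟩ := ih
    exact ⟨w.concat (adj_succ G x b), by rw [Walk.length_concat, hw]; omega⟩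

theorem exists_walk_of_dist_le_two_pow {x y : V} {m n N : ℕ} (hm : m ≤ N) (hn : n ≤ N)
    (hxy : G.dist x y ≤ 2 ^ N) :
    ∃ w : (Horoball G).Walk (x, m) (y, n), w.length ≤ (N - m) + (N - n) + 1 := by
  obtain ⟨up, hup⟩ := exists_walk_vertical G x hm
  obtain ⟨down, hdown⟩ := exists_walk_vertical G y hn
  by_cases hx : x = y
  · subst hx
    exact ⟨up.append down.reverse, by
      simp only [Walk.length_append, Walk.length_reverse]; omega⟩
  · have across : (Horoball G).Adj (x, N) (y, N) := Or.inl ⟨rfl, hx, hxy⟩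
    exact ⟨(up.concat across).append down.reverse, by
      simp only [Walk.length_append, Walk.length_concat, Walk.length_reverse]; omega⟩

theorem dist_le_of_dist_le_two_pow {x y : V} {m n N : ℕ} (hm : m ≤ N) (hn : n ≤ N)
    (hxy : G.dist x y ≤ 2 ^ N) :
    (Horoball G).dist (x, m) (y, n) ≤ (N - m) + (N - n) + 1 := by
  obtain ⟨w, hw⟩ := exists_walk_of_dist_le_two_pow G hm hn hxy
  exact (dist_le w).trans hw

theorem reachable (x y : V) (m n : ℕ) : (Horoball G).Reachable (x, m) (y, n) := by
  set N := max (max m n) (G.dist x y)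
  have hxy : G.dist x y ≤ 2 ^ N :=
    Nat.lt_two_pow_self.le.trans (Nat.pow_le_pow_right two_pos (le_max_right _ _))
  obtain ⟨w, -⟩ := exists_walk_of_dist_le_two_pow G (m := m) (n := n) (by omega) (by omega) hxy
  exact ⟨w⟩

end Walks

variable {G : SimpleGraph V}

theorem snd_le_add_length {p q : V × ℕ} (w : (Horoball G).Walk p q) :
    q.2 ≤ p.2 + w.length := by
  induction w with
  | nil => simp
  | cons h _ ih =>
    rw [Walk.length_cons]
    rcases h with ⟨h, -, -⟩ | ⟨-, h | h⟩ <;> omega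

theorem dist_fst_le_of_walk (hG : G.Connected) {p q : V × ℕ} (w : (Horoball G).Walk p q) :
    (G.dist p.1 q.1 : ℝ) ≤ 3 * √2 ^ (w.length + p.2 + q.2) := by
  have one_le_sqrt_two : (1 : ℝ) ≤ √2 := Real.one_le_sqrt.mpr one_le_two
  induction w with
  | nil => simp only [dist_self, Nat.cast_zero]; positivity
  | @cons a b c hab tl ih =>
    rw [Walk.length_cons]
    obtain ⟨hlevel, -, hstep⟩ | ⟨hfst, hlevel⟩ := hab
    · set s := tl.length + b.2 + c.2
      have hb : b.2 ≤ c.2 + tl.length := by simpa using snd_le_add_length tl.reverse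
      have hstep' : (G.dist a.1 b.1 : ℝ) ≤ √2 ^ s := by
        calc (G.dist a.1 b.1 : ℝ) ≤ 2 ^ a.2 := by exact_mod_cast hstep
          _ = √2 ^ (2 * a.2) := by rw [pow_mul, Real.sq_sqrt zero_le_two]
          _ ≤ √2 ^ s := pow_le_pow_right₀ one_le_sqrt_two (by omega)
      -- `3` is chosen so that `1 + 3 ≤ 3 √2`, i.e. `3 ≥ 1 / (√2 - 1)`
      have h43 : (4 : ℝ) ≤ 3 * √2 := by
        nlinarith [Real.sq_sqrt (zero_le_two (α := ℝ)), Real.sqrt_nonneg 2]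
      calc (G.dist a.1 c.1 : ℝ) ≤ G.dist a.1 b.1 + G.dist b.1 c.1 := by
            exact_mod_cast hG.dist_triangle
        _ ≤ 4 * √2 ^ s := by linarith
        _ ≤ 3 * √2 * √2 ^ s := by gcongr
        _ = 3 * √2 ^ (tl.length + 1 + a.2 + c.2) := by
            rw [show tl.length + 1 + a.2 + c.2 = s + 1 by omega, pow_succ]; ring
    · rw [hfst]
      exact ih.trans <| mul_le_mul_of_nonneg_left
        (pow_le_pow_right₀ one_le_sqrt_two (by omega)) zero_le_three

theorem dist_le_three_mul_two_pow (hG : G.Connected) (x y : V) (m n : ℕ) :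
    (G.dist x y : ℝ) ≤ 3 * 2 ^ (((Horoball G).dist (x, m) (y, n) + m + n + 1) / 2) := by
  obtain ⟨w, hw⟩ := (reachable G x y m n).exists_walk_length_eq_dist
  calc (G.dist x y : ℝ) ≤ 3 * √2 ^ (w.length + m + n) := dist_fst_le_of_walk hG w
    _ ≤ 3 * √2 ^ (2 * ((w.length + m + n + 1) / 2)) := by
        gcongr
        · exact Real.one_le_sqrt.mpr one_le_two
        · omega
    _ = 3 * 2 ^ (((Horoball G).dist (x, m) (y, n) + m + n + 1) / 2) := by
        rw [pow_mul, Real.sq_sqrt zero_le_two, hw]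

theorem dist_le_dist_add_of_dist_le {W : Type*} {G' : SimpleGraph W} (hG : G.Connected)
    {x y : V} {x' y' : W} {μ ν : ℝ} (hμ : 0 ≤ μ) (hν : 0 ≤ ν)
    (hd : (G'.dist x' y' : ℝ) ≤ μ * G.dist x y + ν) {k : ℕ} (hk : 3 * μ + ν ≤ 2 ^ k)
    (m n : ℕ) :
    (Horoball G').dist (x', m) (y', n) ≤ (Horoball G).dist (x, m) (y, n) + (2 * k + 3) := by
  set h := (Horoball G).dist (x, m) (y, n)
  set t := (h + m + n + 1) / 2
  have hlevel : m ≤ n + h ∧ n ≤ m + h := by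
    obtain ⟨w, hw⟩ := (reachable G x y m n).exists_walk_length_eq_dist
    exact ⟨by simpa [hw] using snd_le_add_length w.reverse,
      by simpa [hw] using snd_le_add_length w⟩
  have hxy' : (G'.dist x' y' : ℝ) ≤ 2 ^ (k + t) := by
    calc (G'.dist x' y' : ℝ) ≤ μ * G.dist x y + ν := hd
      _ ≤ μ * (3 * 2 ^ t) + ν * 2 ^ t := by
          gcongr
          · exact dist_le_three_mul_two_pow hG x y m n
          · exact le_mul_of_one_le_right hν (one_le_pow₀ one_le_two)
      _ = (3 * μ + ν) * 2 ^ t := by ring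
      _ ≤ 2 ^ k * 2 ^ t := by gcongr
      _ = 2 ^ (k + t) := (pow_add 2 k t).symm
  set N := max (max m n) (k + t)
  have hxyN : G'.dist x' y' ≤ 2 ^ N :=
    (show G'.dist x' y' ≤ 2 ^ (k + t) by exact_mod_cast hxy').trans
      (Nat.pow_le_pow_right two_pos (le_max_right _ _))
  have := dist_le_of_dist_le_two_pow G' (m := m) (n := n) (by omega) (by omega) hxyN
  omega

end Horoball

/-- A `(λ, c)`-quasi-isometric embedding between connected graphs (with their path
metrics) extends to a quasi-isometric embedding `F(x, m) = (f x, m)` between their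
combinatorial horoballs, with constants depending only on `λ` and `c`. -/
theorem horoball_extension_qie (lam c : ℝ) (hlam : 1 ≤ lam) (hc : 0 ≤ c) :
    ∃ lam' c' : ℝ, 1 ≤ lam' ∧ 0 ≤ c' ∧
      ∀ (V W : Type) (G : SimpleGraph V) (G' : SimpleGraph W),
        G.Connected → G'.Connected →
        ∀ f : V → W,
          (∀ x y : V,
            (1 / lam) * (G.dist x y : ℝ) - c ≤ (G'.dist (f x) (f y) : ℝ) ∧
            (G'.dist (f x) (f y) : ℝ) ≤ lam * (G.dist x y : ℝ) + c) →
          ∀ p q : V × ℕ,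
            (1 / lam') * ((Horoball G).dist p q : ℝ) - c' ≤
              ((Horoball G').dist (f p.1, p.2) (f q.1, q.2) : ℝ) ∧
            ((Horoball G').dist (f p.1, p.2) (f q.1, q.2) : ℝ) ≤
              lam' * ((Horoball G).dist p q : ℝ) + c' := by
  have hlam0 : 0 < lam := one_pos.trans_le hlam
  obtain ⟨k, hk⟩ : ∃ k : ℕ, 3 * lam + lam * c ≤ 2 ^ k :=
    (pow_unbounded_of_one_lt _ one_lt_two).imp fun _ ↦ le_of_lt
  refine ⟨1, 2 * k + 3, le_rfl, by positivity, ?_⟩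
  rintro V W G G' hG hG' f hf ⟨x, m⟩ ⟨y, n⟩
  have hinv : (G.dist x y : ℝ) ≤ lam * G'.dist (f x) (f y) + lam * c := by
    rw [← mul_add, ← inv_mul_le_iff₀ hlam0, ← sub_le_iff_le_add, ← one_div]
    exact (hf x y).1
  have up := Horoball.dist_le_dist_add_of_dist_le hG hlam0.le hc (hf x y).2
    (hk.trans' (by nlinarith)) m n
  have down := Horoball.dist_le_dist_add_of_dist_le hG' hlam0.le (by positivity) hinv hk m n
  constructor
  · rw [div_one, one_mul, sub_le_iff_le_add]
    exact_mod_cast down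
  · rw [one_mul]
    exact_mod_cast up
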